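/- For all g, h ∈ SL₂(ℝ) and z ∈ ℍ, ω(g,h) = (1/4)[sign(c(-d)(g)) + sign(c(-d)(h)) − sign(c(-d)(gh)) − sign(c(-d)(g)·c(-d)(h)·c(-d)(gh))], where ω(g,h) = (1/(2πi))(Log j(g,h·z) + Log j(h,z) − Log j(gh,z)). -/

import Mathlib

open Complex

/-- The automorphy factor `j(g,z) = cz + d` for `g = (a b; c d) ∈ SL₂(ℝ)`. -/
noncomputable def jf (g : Matrix.SpecialLinearGroup (Fin 2) ℝ) (z : ℂ) : ℂ :=
  (g.1 1 0 : ℝ) * z + (g.1 1 1 : ℝ)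

/-- The Möbius action `g·z = (az+b)/(cz+d)`. -/
noncomputable def act (g : Matrix.SpecialLinearGroup (Fin 2) ℝ) (z : ℂ) : ℂ :=
  ((g.1 0 0 : ℝ) * z + (g.1 0 1 : ℝ)) / jf g z

/-- `ω(g,h) = (1/(2πi))(Log j(g,h·z) + Log j(h,z) − Log j(gh,z))`. -/
noncomputable def om (g h : Matrix.SpecialLinearGroup (Fin 2) ℝ) (z : ℂ) : ℂ :=
  (1 / (2 * Real.pi * I)) *
    (Complex.log (jf g (act h z)) + Complex.log (jf h z) - Complex.log (jf (g * h) z))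

/-- `c(-d)(g) = c` if `c ≠ 0`, and `-d` if `c = 0`. -/
noncomputable def cd (g : Matrix.SpecialLinearGroup (Fin 2) ℝ) : ℝ :=
  if g.1 1 0 ≠ 0 then g.1 1 0 else -(g.1 1 1)

/-!
By the cocycle relation `j(gh, z) = j(g, h·z) j(h, z)`, the real part of the logarithms cancels
and `ω(g, h) = (arg j(g, h·z) + arg j(h, z) - arg j(gh, z)) / 2π`, which is `1`, `-1` or `0`
according as the sum of the first two arguments exceeds `π`, is at most `-π`, or neither.
For `z` in the upper half plane, `arg j(g, z)` lies in `(0, π]` when `c(-d)(g) > 0` and in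
`(-π, 0]` when `c(-d)(g) < 0`, so these three cases are read off from the three signs.
-/

namespace Real

theorem sign_mul (x y : ℝ) : sign (x * y) = sign x * sign y := by
  rcases lt_trichotomy x 0 with hx | rfl | hx <;> rcases lt_trichotomy y 0 with hy | rfl | hy <;>
    simp [sign_of_pos, sign_of_neg, mul_pos_of_neg_of_neg, mul_neg_of_neg_of_pos,
      mul_neg_of_pos_of_neg, *]

theorem sign_eq_ite_of_pos_iff {s a : ℝ} (hs : s ≠ 0) (h : 0 < s ↔ 0 < a) :
    sign s = if 0 < a then 1 else -1 := by
  rcases hs.lt_or_gt with hs | hs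
  · rw [sign_of_neg hs, if_neg (h.not.1 hs.not_gt)]
  · rw [sign_of_pos hs, if_pos (h.1 hs)]

end Real

namespace Complex

variable {x y : ℂ}

theorem arg_pos_iff_of_im_ne_zero (hx : x.im ≠ 0) : 0 < arg x ↔ 0 < x.im := by
  constructor
  · intro h
    exact hx.lt_or_gt.resolve_left fun hneg => (arg_neg_iff.2 hneg).not_gt h
  · intro h
    exact (arg_nonneg_iff.2 h.le).lt_of_ne fun h0 => hx (arg_eq_zero_iff.1 h0.symm).2

theorem arg_mul_eq_of_coe_eq (hx : x ≠ 0) (hy : y ≠ 0) {θ : ℝ}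
    (hθ : θ ∈ Set.Ioc (-Real.pi) Real.pi) (h : (θ : Real.Angle) = arg x + arg y) :
    arg (x * y) = θ := by
  rw [← arg_coe_angle_toReal_eq_arg, arg_mul_coe_angle hx hy, ← h,
    Real.Angle.toReal_coe_eq_self_iff_mem_Ioc.2 hθ]

theorem arg_mul_of_pi_lt_add (hx : x ≠ 0) (hy : y ≠ 0) (h : Real.pi < arg x + arg y) :
    arg (x * y) = arg x + arg y - 2 * Real.pi := by
  refine arg_mul_eq_of_coe_eq hx hy ⟨by linarith, by linarith [arg_le_pi x, arg_le_pi y]⟩ ?_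
  rw [Real.Angle.coe_sub, Real.Angle.coe_two_pi, sub_zero, Real.Angle.coe_add]

theorem arg_mul_of_add_le_neg_pi (hx : x ≠ 0) (hy : y ≠ 0) (h : arg x + arg y ≤ -Real.pi) :
    arg (x * y) = arg x + arg y + 2 * Real.pi := by
  refine arg_mul_eq_of_coe_eq hx hy
    ⟨by linarith [neg_pi_lt_arg x, neg_pi_lt_arg y], by linarith⟩ ?_
  rw [Real.Angle.coe_add _ (2 * _), Real.Angle.coe_two_pi, add_zero, Real.Angle.coe_add]

theorem log_add_log_sub_log_mul (hx : x ≠ 0) (hy : y ≠ 0) :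
    log x + log y - log (x * y) = ((arg x + arg y - arg (x * y) : ℝ) : ℂ) * I := by
  apply Complex.ext
  · simp [log_re, Real.log_mul (norm_ne_zero_iff.2 hx) (norm_ne_zero_iff.2 hy)]
  · simp [log_im]

theorem arg_add_arg_sub_arg_mul_eq_sign (hx : x ≠ 0) (hy : y ≠ 0) {s₁ s₂ s₃ : ℝ}
    (hs₁ : s₁ ≠ 0) (hs₂ : s₂ ≠ 0) (hs₃ : s₃ ≠ 0) (h₁ : 0 < s₁ ↔ 0 < arg x)
    (h₂ : 0 < s₂ ↔ 0 < arg y) (h₃ : 0 < s₃ ↔ 0 < arg (x * y)) :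
    arg x + arg y - arg (x * y) = Real.pi / 2 *
      (Real.sign s₁ + Real.sign s₂ - Real.sign s₃ - Real.sign (s₁ * s₂ * s₃)) := by
  simp only [Real.sign_mul, Real.sign_eq_ite_of_pos_iff hs₁ h₁, Real.sign_eq_ite_of_pos_iff hs₂ h₂,
    Real.sign_eq_ite_of_pos_iff hs₃ h₃]
  have := arg_le_pi x; have := arg_le_pi y
  have := neg_pi_lt_arg x; have := neg_pi_lt_arg y
  rcases lt_or_ge Real.pi (arg x + arg y) with hπ | hπ
  · rw [arg_mul_of_pi_lt_add hx hy hπ]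
    split_ifs <;> linarith
  rcases le_or_gt (arg x + arg y) (-Real.pi) with hπ' | hπ'
  · rw [arg_mul_of_add_le_neg_pi hx hy hπ']
    split_ifs <;> linarith
  · rw [arg_mul hx hy ⟨hπ', hπ⟩]
    split_ifs <;> linarith

end Complex

section SL2

variable (g h : Matrix.SpecialLinearGroup (Fin 2) ℝ) {z : ℂ}

theorem SL2_det_fin_two : g.1 0 0 * g.1 1 1 - g.1 0 1 * g.1 1 0 = 1 := by
  rw [← Matrix.det_fin_two, g.2]

theorem SL2_apply_one_one_ne_zero_of_apply_one_zero_eq_zero (hc : g.1 1 0 = 0) : g.1 1 1 ≠ 0 := by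
  intro hd
  simpa [hc, hd] using SL2_det_fin_two g

theorem cd_ne_zero : cd g ≠ 0 := by
  unfold cd
  split_ifs with hc
  · exact hc
  · exact neg_ne_zero.2 (SL2_apply_one_one_ne_zero_of_apply_one_zero_eq_zero g (not_not.1 hc))

theorem im_jf : (jf g z).im = g.1 1 0 * z.im := by
  simp [jf]

theorem jf_ne_zero (hz : 0 < z.im) : jf g z ≠ 0 := by
  by_cases hc : g.1 1 0 = 0
  · simpa [jf, hc] using SL2_apply_one_one_ne_zero_of_apply_one_zero_eq_zero g hc
  · intro h0
    have := im_jf g (z := z)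
    simp [h0, hc, hz.ne'] at this

theorem im_act : (act g z).im = z.im / normSq (jf g z) := by
  rw [act, div_im, div_sub_div_same]
  congr 1
  simp only [jf, add_re, add_im, mul_re, mul_im, ofReal_re, ofReal_im, zero_mul, sub_zero,
    add_zero]
  linear_combination z.im * SL2_det_fin_two g

theorem im_act_pos (hz : 0 < z.im) : 0 < (act g z).im := by
  rw [im_act g]
  exact div_pos hz (normSq_pos.2 (jf_ne_zero g hz))

theorem jf_mul (hz : 0 < z.im) : jf (g * h) z = jf g (act h z) * jf h z := by
  have hj : ((h.1 1 0 : ℝ) : ℂ) * z + ((h.1 1 1 : ℝ) : ℂ) ≠ 0 := jf_ne_zero h hz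
  simp only [jf, act, Matrix.SpecialLinearGroup.coe_mul, Matrix.mul_apply, Fin.sum_univ_two]
  push_cast
  field_simp
  ring

theorem cd_pos_iff_arg_jf_pos (hz : 0 < z.im) : 0 < cd g ↔ 0 < arg (jf g z) := by
  by_cases hc : g.1 1 0 = 0
  · have hjf : jf g z = (g.1 1 1 : ℂ) := by simp [jf, hc]
    rw [cd, if_neg (not_not.2 hc), hjf, neg_pos]
    rcases lt_or_ge (g.1 1 1) 0 with hd | hd
    · simp [arg_ofReal_of_neg hd, Real.pi_pos, hd]
    · simp [arg_ofReal_of_nonneg hd, hd.not_gt]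
  · rw [cd, if_pos hc, arg_pos_iff_of_im_ne_zero (by simp [im_jf, hc, hz.ne']), im_jf,
      mul_pos_iff_of_pos_right hz]

end SL2

theorem om_formula (g h : Matrix.SpecialLinearGroup (Fin 2) ℝ) (z : ℂ) (hz : 0 < z.im) :
    om g h z = (((1/4 : ℝ) * (Real.sign (cd g) + Real.sign (cd h) - Real.sign (cd (g * h))
      - Real.sign (cd g * cd h * cd (g * h)))) : ℝ) := by
  have hhz := im_act_pos h hz
  have hgh := cd_pos_iff_arg_jf_pos (g * h) hz
  rw [jf_mul g h hz] at hgh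
  rw [om, jf_mul g h hz, log_add_log_sub_log_mul (jf_ne_zero g hhz) (jf_ne_zero h hz),
    arg_add_arg_sub_arg_mul_eq_sign (jf_ne_zero g hhz) (jf_ne_zero h hz) (cd_ne_zero g)
      (cd_ne_zero h) (cd_ne_zero (g * h)) (cd_pos_iff_arg_jf_pos g hhz)
      (cd_pos_iff_arg_jf_pos h hz) hgh]
  push_cast
  field_simp
  ring
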